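/- arXiv:1807.09405 — 4 statements merged into one kernel-verified Lean document; each statement's English description precedes it below -/
import Mathlib

section
/- Let g: 2^V → ℝ≥0 be monotone submodular with g(∅)=0, and let M=(V,I) be a matroid of rank r. Suppose S = {e_1,…,e_r} is a basis built by adding elements one at a time, with the property that for each i, the marginal gain g_{S_{i-1}}(e_i) ≥ (1−δ)·g_{S_{i-1}}(x) for every x ∈ V with S_{i-1}+x ∈ I, where S_{i-1} = {e_1,…,e_{i-1}} and δ ∈ (0,1). Then g(S) ≥ ((1−δ)/(2−δ)) · max_{T ∈ I} g(T). -/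
/-- Threshold-greedy guarantee: if a basis `S = {e₁,…,e_r}` is built so that each added
element has marginal gain at least `(1-δ)` times that of any feasible alternative, then
`g(S) ≥ (1-δ)/(2-δ) · max_{T ∈ I} g(T)`. -/
theorem threshold_greedy_matroid_guarantee
    {V : Type*} [DecidableEq V] (g : Finset V → ℝ)
    (Indep : Finset V → Prop)
    (hI_empty : Indep ∅)
    (hI_subset : ∀ A B : Finset V, Indep B → A ⊆ B → Indep A)
    (hI_exchange : ∀ A B : Finset V, Indep A → Indep B → A.card < B.card →
      ∃ e ∈ B \ A, Indep (insert e A))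
    (hnn : ∀ S, 0 ≤ g S)
    (hmono : ∀ A B : Finset V, A ⊆ B → g A ≤ g B)
    (hsub : ∀ (e : V) (A B : Finset V), A ⊆ B → e ∉ B →
      g (insert e B) - g B ≤ g (insert e A) - g A)
    (h0 : g ∅ = 0)
    (δ : ℝ) (hδ0 : 0 < δ) (hδ1 : δ < 1)
    (r : ℕ) (e : ℕ → V)
    (hinj : ∀ i < r, ∀ j < r, e i = e j → i = j)
    (S : ℕ → Finset V) (hSdef : ∀ i, S i = (Finset.range i).image e)
    (hbasis : Indep (S r) ∧ ∀ T : Finset V, Indep T → S r ⊆ T → T = S r)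
    (hgreedy : ∀ i < r, ∀ x : V, Indep (insert x (S i)) →
      (1 - δ) * (g (insert x (S i)) - g (S i)) ≤ g (insert (e i) (S i)) - g (S i)) :
    ∀ T : Finset V, Indep T → ((1 - δ) / (2 - δ)) * g T ≤ g (S r) := by
  classical
  intro T hT
  -- basic facts about S
  have hSmono : ∀ {i j : ℕ}, i ≤ j → S i ⊆ S j := by
    intro i j hij
    rw [hSdef i, hSdef j]
    exact Finset.image_subset_image (Finset.range_subset_range.mpr hij)
  have hScard : ∀ i, (S i).card ≤ i := by
    intro i
    rw [hSdef i]
    calc ((Finset.range i).image e).card ≤ (Finset.range i).card := Finset.card_image_le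
    _ = i := Finset.card_range i
  have hSsucc : ∀ i, S (i + 1) = insert (e i) (S i) := by
    intro i
    rw [hSdef i, hSdef (i + 1), Finset.range_add_one, Finset.image_insert]
  -- growth lemma: any independent A can be grown to cover the cardinality of B
  have grow : ∀ n : ℕ, ∀ A B : Finset V, Indep A → Indep B → B.card - A.card ≤ n →
      ∃ D : Finset V, Indep D ∧ A ⊆ D ∧ D \ A ⊆ B ∧ B.card ≤ D.card := by
    intro n
    induction n with
    | zero =>
      intro A B hA hB hle
      exact ⟨A, hA, subset_rfl, by simp, by omega⟩
    | succ n ih =>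
      intro A B hA hB hle
      by_cases hcard : B.card ≤ A.card
      · exact ⟨A, hA, subset_rfl, by simp, hcard⟩
      · obtain ⟨x, hxBA, hxI⟩ := hI_exchange A B hA hB (by omega)
        rw [Finset.mem_sdiff] at hxBA
        have hcard' : (insert x A).card = A.card + 1 := Finset.card_insert_of_notMem hxBA.2
        obtain ⟨D, hD, hAD, hDA, hBD⟩ := ih (insert x A) B hxI hB (by omega)
        refine ⟨D, hD, subset_trans (Finset.subset_insert _ _) hAD, ?_, hBD⟩
        intro y hy
        rw [Finset.mem_sdiff] at hy
        by_cases hyx : y = x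
        · exact hyx ▸ hxBA.1
        · exact hDA (Finset.mem_sdiff.mpr ⟨hy.1, fun h => by
            rcases Finset.mem_insert.mp h with h | h
            · exact hyx h
            · exact hy.2 h⟩)
  -- T has at most r elements
  have hTcard : T.card ≤ r := by
    obtain ⟨D, hD, hSD, hDS, hTD⟩ := grow (T.card - (S r).card) (S r) T hbasis.1 hT le_rfl
    have := hbasis.2 D hD hSD
    calc T.card ≤ D.card := hTD
    _ = (S r).card := by rw [this]
    _ ≤ r := hScard r
  -- counting lemma: at most k elements of T \ S r are infeasible at step k
  have badcount : ∀ k ≤ r,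
      ((T \ S r).filter (fun x => ¬ Indep (insert x (S k)))).card ≤ k := by
    intro k hk
    set A : Finset V := S k ∪ (T ∩ S r) with hAdef
    have hAsub : A ⊆ S r := Finset.union_subset (hSmono hk) Finset.inter_subset_right
    have hAI : Indep A := hI_subset A (S r) hbasis.1 hAsub
    obtain ⟨D, hD, hAD, hDA, hTD⟩ := grow (T.card - A.card) A T hAI hT le_rfl
    have hgood : D \ A ⊆ (T \ S r).filter (fun x => Indep (insert x (S k))) := by
      intro x hx
      rw [Finset.mem_sdiff] at hx
      have hxT : x ∈ T := hDA (Finset.mem_sdiff.mpr hx)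
      have hxS : x ∉ S r := fun h => hx.2 (Finset.mem_union_right _ (Finset.mem_inter.mpr ⟨hxT, h⟩))
      refine Finset.mem_filter.mpr ⟨Finset.mem_sdiff.mpr ⟨hxT, hxS⟩, ?_⟩
      exact hI_subset _ D hD (Finset.insert_subset hx.1
        (subset_trans Finset.subset_union_left hAD))
    have h1 : (D \ A).card + A.card = D.card := Finset.card_sdiff_add_card_eq_card hAD
    have h2 : A.card ≤ k + (T ∩ S r).card := by
      calc A.card ≤ (S k).card + (T ∩ S r).card := Finset.card_union_le _ _
      _ ≤ k + (T ∩ S r).card := by have := hScard k; omega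
    have h3 : (T ∩ S r).card + (T \ S r).card = T.card := Finset.card_inter_add_card_sdiff T (S r)
    have h4 : ((T \ S r).filter (fun x => Indep (insert x (S k)))).card +
        ((T \ S r).filter (fun x => ¬ Indep (insert x (S k)))).card = (T \ S r).card :=
      Finset.card_filter_add_card_filter_not _
    have h5 : (D \ A).card ≤ ((T \ S r).filter (fun x => Indep (insert x (S k)))).card :=
      Finset.card_le_card hgood
    omega
  -- down-closedness of feasibility
  have hdown : ∀ (x : V) {i j : ℕ}, i ≤ j → Indep (insert x (S j)) → Indep (insert x (S i)) :=
    fun x i j hij h => hI_subset _ _ h (Finset.insert_subset_insert _ (hSmono hij))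
  -- Hall's theorem gives an injective assignment of steps
  set ι : {x // x ∈ T \ S r} → Finset ℕ :=
    fun x => (Finset.range r).filter (fun i => Indep (insert x.1 (S i))) with hιdef
  have hall : ∃ f : {x // x ∈ T \ S r} → ℕ, Function.Injective f ∧ ∀ x, f x ∈ ι x := by
    rw [← Finset.all_card_le_biUnion_card_iff_exists_injective]
    intro s
    rcases Finset.eq_empty_or_nonempty s with hs | hs
    · simp [hs]
    · have hscard : s.card ≤ r := by
        calc s.card ≤ (T \ S r).attach.card :=
          Finset.card_le_card (fun x _ => Finset.mem_attach _ x)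
        _ = (T \ S r).card := Finset.card_attach
        _ ≤ T.card := Finset.card_le_card (Finset.sdiff_subset)
        _ ≤ r := hTcard
      have hspos : 1 ≤ s.card := Finset.Nonempty.card_pos hs
      set k := s.card - 1 with hkdef
      have hkr : k < r := by omega
      -- some x₀ ∈ s is feasible at step k
      have : ∃ x₀ ∈ s, Indep (insert x₀.1 (S k)) := by
        by_contra hcon
        push_neg at hcon
        have himg : s.image Subtype.val ⊆
            (T \ S r).filter (fun x => ¬ Indep (insert x (S k))) := by
          intro y hy
          obtain ⟨x, hxs, rfl⟩ := Finset.mem_image.mp hy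
          exact Finset.mem_filter.mpr ⟨x.2, hcon x hxs⟩
        have hcard : (s.image Subtype.val).card = s.card :=
          Finset.card_image_of_injective s Subtype.val_injective
        have := badcount k (le_of_lt hkr)
        have := Finset.card_le_card himg
        omega
      obtain ⟨x₀, hx₀s, hx₀⟩ := this
      have hsub' : Finset.range (k + 1) ⊆ s.biUnion ι := by
        intro i hi
        rw [Finset.mem_range] at hi
        refine Finset.mem_biUnion.mpr ⟨x₀, hx₀s, ?_⟩
        exact Finset.mem_filter.mpr ⟨Finset.mem_range.mpr (by omega),
          hdown x₀.1 (by omega) hx₀⟩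
      calc s.card = k + 1 := by omega
      _ = (Finset.range (k + 1)).card := (Finset.card_range _).symm
      _ ≤ (s.biUnion ι).card := Finset.card_le_card hsub'
  obtain ⟨f, hfinj, hfmem⟩ := hall
  -- telescoping marginal bound: g (A ∪ B) ≤ g B + ∑_{x ∈ A \ B} marginal
  have marg : ∀ A B : Finset V,
      g (A ∪ B) ≤ g B + ∑ x ∈ A \ B, (g (insert x B) - g B) := by
    intro A B
    induction A using Finset.induction_on with
    | empty => simp
    | @insert a A ha ih =>
      by_cases haB : a ∈ B
      · have h1 : insert a A ∪ B = A ∪ B := by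
          rw [Finset.insert_union, Finset.insert_eq_self.mpr (Finset.mem_union_right _ haB)]
        have h2 : insert a A \ B = A \ B := by
          rw [Finset.insert_sdiff_of_mem _ haB]
        rw [h1, h2]; exact ih
      · by_cases haA : a ∈ A ∪ B
        · have h1 : insert a A ∪ B = A ∪ B := by
            rw [Finset.insert_union, Finset.insert_eq_self.mpr haA]
          have h2 : insert a A \ B = insert a (A \ B) := Finset.insert_sdiff_of_notMem _ haB
          have haAB : a ∉ A \ B := fun h => ha (Finset.mem_sdiff.mp h).1
          rw [h1, h2, Finset.sum_insert haAB]
          have hpos : 0 ≤ g (insert a B) - g B := by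
            have := hmono B (insert a B) (Finset.subset_insert a B)
            linarith
          linarith [ih]
        · have h1 : insert a A ∪ B = insert a (A ∪ B) := Finset.insert_union a A B
          have h2 : insert a A \ B = insert a (A \ B) := Finset.insert_sdiff_of_notMem _ haB
          have haAB : a ∉ A \ B := fun h => ha (Finset.mem_sdiff.mp h).1
          rw [h1, h2, Finset.sum_insert haAB]
          have hkey : g (insert a (A ∪ B)) - g (A ∪ B) ≤ g (insert a B) - g B :=
            hsub a B (A ∪ B) Finset.subset_union_right haA
          linarith [ih]
  -- main chain of inequalities
  have hstep1 : g T ≤ g (S r) + ∑ x ∈ T \ S r, (g (insert x (S r)) - g (S r)) := by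
    calc g T ≤ g (T ∪ S r) := hmono _ _ Finset.subset_union_left
    _ ≤ _ := marg T (S r)
  -- bound each marginal via the greedy property
  have hterm : ∀ x : {x // x ∈ T \ S r},
      (1 - δ) * (g (insert x.1 (S r)) - g (S r)) ≤ g (S (f x + 1)) - g (S (f x)) := by
    intro x
    have hfx := hfmem x
    rw [hιdef, Finset.mem_filter, Finset.mem_range] at hfx
    have hxS : x.1 ∉ S r := (Finset.mem_sdiff.mp x.2).2
    have h1 : g (insert x.1 (S r)) - g (S r) ≤ g (insert x.1 (S (f x))) - g (S (f x)) :=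
      hsub x.1 (S (f x)) (S r) (hSmono (le_of_lt hfx.1)) hxS
    have h2 := hgreedy (f x) hfx.1 x.1 hfx.2
    rw [← hSsucc (f x)] at h2
    have hδ : (0:ℝ) < 1 - δ := by linarith
    nlinarith
  have hgain_nn : ∀ i : ℕ, 0 ≤ g (S (i + 1)) - g (S i) := by
    intro i
    have := hmono (S i) (S (i + 1)) (hSmono (Nat.le_succ i))
    linarith
  have hsum : (1 - δ) * (∑ x ∈ T \ S r, (g (insert x (S r)) - g (S r))) ≤ g (S r) := by
    have e1 : ∑ x ∈ T \ S r, (g (insert x (S r)) - g (S r)) =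
        ∑ x ∈ (T \ S r).attach, (g (insert x.1 (S r)) - g (S r)) :=
      (Finset.sum_attach _ _).symm
    have e2 : (1 - δ) * (∑ x ∈ (T \ S r).attach, (g (insert x.1 (S r)) - g (S r))) ≤
        ∑ x ∈ (T \ S r).attach, (g (S (f x + 1)) - g (S (f x))) := by
      rw [Finset.mul_sum]
      exact Finset.sum_le_sum (fun x _ => hterm x)
    have e3 : ∑ x ∈ (T \ S r).attach, (g (S (f x + 1)) - g (S (f x))) =
        ∑ i ∈ (T \ S r).attach.image f, (g (S (i + 1)) - g (S i)) := by
      rw [Finset.sum_image (fun x _ y _ h => hfinj h)]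
    have e4 : ∑ i ∈ (T \ S r).attach.image f, (g (S (i + 1)) - g (S i)) ≤
        ∑ i ∈ Finset.range r, (g (S (i + 1)) - g (S i)) := by
      apply Finset.sum_le_sum_of_subset_of_nonneg
      · intro i hi
        obtain ⟨x, _, rfl⟩ := Finset.mem_image.mp hi
        have hfx := hfmem x
        rw [hιdef, Finset.mem_filter] at hfx
        exact hfx.1
      · intro i _ _; exact hgain_nn i
    have e5 : ∑ i ∈ Finset.range r, (g (S (i + 1)) - g (S i)) = g (S r) - g (S 0) :=
      Finset.sum_range_sub (fun i => g (S i)) r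
    have e6 : g (S 0) = 0 := by
      rw [hSdef 0]; simp [h0]
    rw [e1]
    calc (1 - δ) * (∑ x ∈ (T \ S r).attach, (g (insert x.1 (S r)) - g (S r))) ≤
        ∑ x ∈ (T \ S r).attach, (g (S (f x + 1)) - g (S (f x))) := e2
    _ = ∑ i ∈ (T \ S r).attach.image f, (g (S (i + 1)) - g (S i)) := e3
    _ ≤ ∑ i ∈ Finset.range r, (g (S (i + 1)) - g (S i)) := e4
    _ = g (S r) - g (S 0) := e5
    _ = g (S r) := by rw [e6]; ring
  -- finish with arithmetic
  have hG : 0 ≤ g (S r) := hnn _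
  have hδ' : (0:ℝ) < 1 - δ := by linarith
  have hδ'' : (0:ℝ) < 2 - δ := by linarith
  rw [div_mul_eq_mul_div, div_le_iff₀ hδ'']
  set M := ∑ x ∈ T \ S r, (g (insert x (S r)) - g (S r)) with hM
  nlinarith [hstep1, hsum, hnn T]
end

section
/- Let f_1,…,f_k : 2^V → ℝ≥0 be monotone submodular with f_i(∅) = 0, M = (V,I) a matroid, and OPT = max_{S∈I} min_i f_i(S). Let γ satisfy (1 − ε/2)·OPT ≤ γ ≤ OPT, and define g^γ(S) = (1/k)Σ_i min{f_i(S), γ}. If S^alg ⊆ V satisfies g^γ(S^alg) ≥ (1 − ε/(2k))·max_{S∈I} g^γ(S), then f_i(S^alg) ≥ (1 − ε)·OPT for all i ∈ [k]. -/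
/-!
Truncating at `γ ≤ OPT` makes the optimal robust set `S*` score exactly `γ` in every coordinate,
so `max g^γ = γ`. Every truncated term of `g^γ(S^alg)` is at most `γ`, hence the total shortfall
`k γ - k g^γ(S^alg) ≤ ε γ / 2` bounds the shortfall of each single coordinate:
`fᵢ(S^alg) ≥ (1 - ε/2) γ ≥ (1 - ε/2)² OPT ≥ (1 - ε) OPT`.
-/

open Finset

section TruncatedSum

variable {ι : Type*} [Fintype ι]

theorem sum_min_eq_card_mul_of_forall_le {a : ι → ℝ} {γ : ℝ} (h : ∀ j, γ ≤ a j) :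
    ∑ j, min (a j) γ = Fintype.card ι * γ := by
  simp [min_eq_right (h _)]

theorem sub_le_of_card_mul_sub_le_sum_min {a : ι → ℝ} {γ δ : ℝ}
    (hsum : Fintype.card ι * γ - δ ≤ ∑ j, min (a j) γ) (i : ι) : γ - δ ≤ a i := by
  have hdeficit : ∑ j, (γ - min (a j) γ) ≤ δ := by
    rw [sum_sub_distrib, sum_const, card_univ, nsmul_eq_mul]
    linarith
  have hi : γ - min (a i) γ ≤ ∑ j, (γ - min (a j) γ) :=
    single_le_sum (fun j _ => sub_nonneg.2 (min_le_right (a j) γ)) (mem_univ i)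
  linarith [min_le_left (a i) γ]

end TruncatedSum

theorem two_mul_sub_one_mul_le_mul {c x y : ℝ} (hc : c < 1) (h₁ : c * x ≤ y) (h₂ : y ≤ x) :
    (2 * c - 1) * x ≤ c * y := by
  have hx : 0 ≤ x := by nlinarith
  rcases le_or_gt 0 c with hc0 | hc0
  · nlinarith [mul_le_mul_of_nonneg_left h₁ hc0, sq_nonneg (c - 1)]
  · nlinarith [mul_le_mul_of_nonpos_left h₂ hc0.le]

theorem bicriteria_robust_guarantee_general
    {V : Type*} {k : ℕ} (hk : 0 < k)
    (f : Fin k → Finset V → ℝ)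
    (Indep : Finset V → Prop)
    (ε : ℝ) (hε0 : 0 < ε)
    (Sstar : Finset V) (hSstar : Indep Sstar)
    (OPT : ℝ)
    (hOPT : OPT = Finset.univ.inf' (Finset.univ_nonempty_iff.2 ⟨⟨0, hk⟩⟩)
      fun i => f i Sstar)
    (γ : ℝ) (hγ₁ : (1 - ε / 2) * OPT ≤ γ) (hγ₂ : γ ≤ OPT)
    (gγ : Finset V → ℝ)
    (hgγ : ∀ S, gγ S = (1 / (k : ℝ)) * ∑ i, min (f i S) γ)
    (Salg : Finset V)
    (hSalg : ∀ S : Finset V, Indep S → (1 - ε / (2 * k)) * gγ S ≤ gγ Salg) :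
    ∀ i : Fin k, (1 - ε) * OPT ≤ f i Salg := by
  intro i
  have hk' : (k : ℝ) ≠ 0 := by positivity
  have hγ_le : ∀ j, γ ≤ f j Sstar := fun j => hγ₂.trans (hOPT ▸ inf'_le _ (mem_univ j))
  have hg_star : gγ Sstar = γ := by
    rw [hgγ, sum_min_eq_card_mul_of_forall_le hγ_le, Fintype.card_fin]
    field_simp
  have hsum : (k : ℝ) * γ - ε / 2 * γ ≤ ∑ j, min (f j Salg) γ := by
    have h := hSalg Sstar hSstar
    rw [hg_star, hgγ] at h
    field_simp at h
    linarith
  have hfi : γ - ε / 2 * γ ≤ f i Salg :=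
    sub_le_of_card_mul_sub_le_sum_min (by rwa [Fintype.card_fin]) i
  have hOPT_le := two_mul_sub_one_mul_le_mul (by linarith) hγ₁ hγ₂
  linarith

/-- Bi-criteria guarantee: if `γ` estimates `OPT` up to factor `1 - ε/2` and `S^alg`
nearly maximizes `g^γ` over `I`, then `fᵢ(S^alg) ≥ (1-ε)·OPT` for all `i`. -/
theorem bicriteria_robust_guarantee
    {V : Type*} [DecidableEq V] {k : ℕ} (hk : 0 < k)
    (f : Fin k → Finset V → ℝ)
    (hnn : ∀ i S, 0 ≤ f i S)
    (hmono : ∀ i, ∀ A B : Finset V, A ⊆ B → f i A ≤ f i B)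
    (hsub : ∀ i, ∀ (e : V) (A B : Finset V), A ⊆ B → e ∉ B →
      f i (insert e B) - f i B ≤ f i (insert e A) - f i A)
    (h0 : ∀ i, f i (∅ : Finset V) = 0)
    (Indep : Finset V → Prop)
    (hI_empty : Indep ∅)
    (hI_subset : ∀ A B : Finset V, Indep B → A ⊆ B → Indep A)
    (hI_exchange : ∀ A B : Finset V, Indep A → Indep B → A.card < B.card →
      ∃ e ∈ B \ A, Indep (insert e A))
    (ε : ℝ) (hε0 : 0 < ε) (hε1 : ε < 1)
    (Sstar : Finset V) (hSstar : Indep Sstar)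
    (hopt : ∀ S : Finset V, Indep S →
      (Finset.univ.inf' (Finset.univ_nonempty_iff.2 ⟨⟨0, hk⟩⟩) fun i => f i S) ≤
      (Finset.univ.inf' (Finset.univ_nonempty_iff.2 ⟨⟨0, hk⟩⟩) fun i => f i Sstar))
    (OPT : ℝ)
    (hOPT : OPT = Finset.univ.inf' (Finset.univ_nonempty_iff.2 ⟨⟨0, hk⟩⟩)
      fun i => f i Sstar)
    (γ : ℝ) (hγ₁ : (1 - ε / 2) * OPT ≤ γ) (hγ₂ : γ ≤ OPT)
    (gγ : Finset V → ℝ)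
    (hgγ : ∀ S, gγ S = (1 / (k : ℝ)) * ∑ i, min (f i S) γ)
    (Salg : Finset V)
    (hSalg : ∀ S : Finset V, Indep S → (1 - ε / (2 * k)) * gγ S ≤ gγ Salg) :
    ∀ i : Fin k, (1 - ε) * OPT ≤ f i Salg :=
  bicriteria_robust_guarantee_general hk f Indep ε hε0 Sstar hSstar OPT hOPT γ hγ₁ hγ₂ gγ hgγ Salg
    hSalg
end

section
/- Let g: 2^V → ℝ≥0 be monotone submodular with g(∅) = 0 and S* = {e_1*,…,e_r*} optimal in I. If S is the greedy output satisfying (1−δ)·Σ_{i=1}^r g_{S_{i-1}}(e_i*) ≤ Σ_{i=1}^r (g(S_i) − g(S_{i-1})) = g(S) (with S_i the prefix sets of S), then g(S) ≥ ((1−δ)/(2−δ))·g(S*). -/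
/-- Combining the per-step threshold-greedy inequality with the submodular bound on the
optimum yields `g(S) ≥ (1-δ)/(2-δ) · g(S*)`. -/
theorem threshold_greedy_combined_bound
    {V : Type*} [DecidableEq V] (g : Finset V → ℝ)
    (hnn : ∀ S, 0 ≤ g S)
    (hmono : ∀ A B : Finset V, A ⊆ B → g A ≤ g B)
    (hsub : ∀ (e : V) (A B : Finset V), A ⊆ B → e ∉ B →
      g (insert e B) - g B ≤ g (insert e A) - g A)
    (h0 : g ∅ = 0)
    (δ : ℝ) (hδ0 : 0 < δ) (hδ1 : δ < 1)
    (Indep : Finset V → Prop)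
    (r : ℕ) (e estar : ℕ → V)
    (S : ℕ → Finset V) (hSdef : ∀ i, S i = (Finset.range i).image e)
    (Sstar : Finset V) (hSstar : Sstar = (Finset.range r).image estar)
    (hSstarI : Indep Sstar)
    (hSstarOpt : ∀ T : Finset V, Indep T → g T ≤ g Sstar)
    (hgreedy : (1 - δ) * ∑ i ∈ Finset.range r,
        (g (insert (estar i) (S i)) - g (S i)) ≤ g (S r)) :
    ((1 - δ) / (2 - δ)) * g Sstar ≤ g (S r) := by
  set T : ℕ → Finset V := fun j => S r ∪ (Finset.range j).image estar with hT
  have hTsucc : ∀ j, T (j + 1) = insert (estar j) (T j) := by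
    intro j
    simp [hT, Finset.range_add_one, Finset.image_insert, Finset.union_insert]
  have hstep : ∀ j ∈ Finset.range r,
      g (T (j + 1)) - g (T j) ≤ g (insert (estar j) (S j)) - g (S j) := by
    intro j hj
    have hjr : j ≤ r := le_of_lt (Finset.mem_range.mp hj)
    have hSsub : S j ⊆ T j := by
      have h1 : S j ⊆ S r := by
        rw [hSdef j, hSdef r]
        exact Finset.image_subset_image (Finset.range_subset_range.mpr hjr)
      exact h1.trans Finset.subset_union_left
    rw [hTsucc j]
    by_cases hmem : estar j ∈ T j
    · rw [Finset.insert_eq_self.mpr hmem]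
      have := hmono (S j) (insert (estar j) (S j)) (Finset.subset_insert _ _)
      linarith
    · exact hsub (estar j) (S j) (T j) hSsub hmem
  have htel : ∑ j ∈ Finset.range r, (g (T (j + 1)) - g (T j)) = g (T r) - g (T 0) :=
    Finset.sum_range_sub (fun j => g (T j)) r
  have hsumle : g (T r) - g (T 0) ≤
      ∑ i ∈ Finset.range r, (g (insert (estar i) (S i)) - g (S i)) := by
    rw [← htel]; exact Finset.sum_le_sum hstep
  have hT0 : T 0 = S r := by simp [hT]
  have hstar : g Sstar ≤ g (T r) := by
    apply hmono; rw [hSstar]; exact Finset.subset_union_right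
  have hkey : (1 - δ) * (g Sstar - g (S r)) ≤ g (S r) := by
    have h1δ : (0:ℝ) < 1 - δ := by linarith
    have : g Sstar - g (S r) ≤
        ∑ i ∈ Finset.range r, (g (insert (estar i) (S i)) - g (S i)) := by
      rw [hT0] at hsumle; linarith
    nlinarith
  rw [div_mul_eq_mul_div, div_le_iff₀ (by linarith : (0:ℝ) < 2 - δ)]
  nlinarith [hnn (S r)]
end

section
/- Let g be monotone submodular with g(∅)=0 and suppose sets S_1,…,S_ℓ satisfy the early-stopping certificate property: if for some τ ∈ [ℓ], g(S_1 ∪ ⋯ ∪ S_τ) < (1 − (1/(2−δ))^τ)·γ while each round τ' ≤ τ guarantees g(∪_{t≤τ'} S_t) − g(∪_{t<τ'} S_t) ≥ (1 − 1/(2−δ))·(max_{S∈I} g(S) − g(∪_{t<τ'} S_t)), then max_{S∈I} g(S) < γ. -/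
/-- Early-stopping certificate: if each of the first `τ` rounds closes a
`(1 - 1/(2-δ))` fraction of the gap to the optimum, yet the union after `τ` rounds
has value below `(1 - (1/(2-δ))^τ)·γ`, then the optimum is below `γ`. -/
theorem early_stopping_certificate
    {V : Type*} [DecidableEq V] (g : Finset V → ℝ)
    (Indep : Finset V → Prop)
    (hnn : ∀ S, 0 ≤ g S)
    (hmono : ∀ A B : Finset V, A ⊆ B → g A ≤ g B)
    (hsub : ∀ (e : V) (A B : Finset V), A ⊆ B → e ∉ B →
      g (insert e B) - g B ≤ g (insert e A) - g A)
    (h0 : g ∅ = 0)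
    (δ γ : ℝ) (hδ0 : 0 < δ) (hδ1 : δ < 1) (hγ : 0 < γ)
    (ℓ τ : ℕ) (hτ1 : 1 ≤ τ) (hτℓ : τ ≤ ℓ)
    (Sfun : ℕ → Finset V)
    (Topt : Finset V) (hTopt : Indep Topt)
    (hoptmax : ∀ T : Finset V, Indep T → g T ≤ g Topt)
    (hround : ∀ τ' < τ,
      (1 - 1 / (2 - δ)) *
          (g Topt - g ((Finset.range τ').biUnion Sfun)) ≤
        g ((Finset.range (τ' + 1)).biUnion Sfun) - g ((Finset.range τ').biUnion Sfun))
    (hfail : g ((Finset.range τ).biUnion Sfun) < (1 - (1 / (2 - δ)) ^ τ) * γ) :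
    g Topt < γ := by
  set c : ℝ := 1 / (2 - δ) with hc
  have h2δ : 0 < 2 - δ := by linarith
  have hc0 : 0 < c := by positivity
  have hc1 : c < 1 := by
    rw [hc, div_lt_one h2δ]; linarith
  have key : ∀ k ≤ τ, g Topt - g ((Finset.range k).biUnion Sfun) ≤ c ^ k * g Topt := by
    intro k hk
    induction k with
    | zero => simp [h0]
    | succ n ih =>
      have hn : n ≤ τ := Nat.le_of_succ_le hk
      have ihn := ih hn
      have hr := hround n (Nat.lt_of_succ_le hk)

      have : g Topt - g ((Finset.range (n+1)).biUnion Sfun)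
          ≤ c * (g Topt - g ((Finset.range n).biUnion Sfun)) := by linarith
      calc g Topt - g ((Finset.range (n+1)).biUnion Sfun)
          ≤ c * (g Topt - g ((Finset.range n).biUnion Sfun)) := this
        _ ≤ c * (c ^ n * g Topt) := by
            exact mul_le_mul_of_nonneg_left ihn hc0.le
        _ = c ^ (n+1) * g Topt := by ring
  have hkey := key τ le_rfl
  have hcτ : (0:ℝ) < 1 - c ^ τ := by
    have : c ^ τ < 1 := pow_lt_one₀ hc0.le hc1 (by omega)
    linarith
  have h1 : (1 - c ^ τ) * g Topt ≤ g ((Finset.range τ).biUnion Sfun) := by nlinarith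
  have h2 : (1 - c ^ τ) * g Topt < (1 - c ^ τ) * γ := lt_of_le_of_lt h1 hfail
  exact lt_of_mul_lt_mul_left h2 hcτ.le
end
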